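/- Let p > 1, b < 0 be real numbers. Suppose v, η are smooth functions on ℝⁿ with η compactly supported, η ≥ 0, and v satisfies pointwise b·v·div(|∇v|^{p-2}∇v) + |∇v|^p = 0 with b·v > 0 everywhere on the support of η (so v < 0 there), and |∇v|^{p-2}∇v is C¹. Then ∫ |∇v|^p η^p ≤ (2p|b|/(1-b))^p · ∫ |v|^p |∇η|^p. -/

import Mathlib

open MeasureTheory

noncomputable def divergence {n : ℕ}
    (F : EuclideanSpace ℝ (Fin n) → EuclideanSpace ℝ (Fin n))
    (x : EuclideanSpace ℝ (Fin n)) : ℝ :=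
  ∑ i, fderiv ℝ F x (EuclideanSpace.single i 1) i

lemma young_aux {p t a c : ℝ} (hp : 1 < p) (ht : 0 ≤ t) (ha : 0 ≤ a) (hc : 0 ≤ c) :
    t * (a * c) ≤ a ^ (p / (p - 1)) + t ^ p * c ^ p := by
  set q := p / (p - 1) with hq
  have hpq : p.HolderConjugate q := Real.HolderConjugate.conjExponent hp
  have h1 : (t * c) * a ≤ (t * c) ^ p / p + a ^ q / q :=
    Real.young_inequality_of_nonneg (mul_nonneg ht hc) ha hpq
  have h2 : (t * c) ^ p = t ^ p * c ^ p := Real.mul_rpow ht hc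
  have h3 : (t * c) ^ p / p ≤ (t * c) ^ p :=
    div_le_self (Real.rpow_nonneg (mul_nonneg ht hc) p) hp.le
  have h4 : a ^ q / q ≤ a ^ q := div_le_self (Real.rpow_nonneg ha q) hpq.symm.lt.le
  nlinarith [Real.rpow_nonneg ha q, Real.rpow_nonneg (mul_nonneg ht hc) p]

lemma aux1 {p t : ℝ} (hp : 1 < p) (ht : 0 ≤ t) : t ^ (p - 2) * t ^ (2:ℕ) = t ^ p := by
  rcases ht.eq_or_lt with h | h
  · rw [← h]; simp [Real.zero_rpow (show p ≠ 0 by linarith)]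
  · rw [← Real.rpow_natCast t 2, ← Real.rpow_add h]; norm_num

lemma aux2 {p t : ℝ} (hp : 1 < p) (ht : 0 ≤ t) : t ^ (p - 2) * t = t ^ (p - 1) := by
  rcases ht.eq_or_lt with h | h
  · rw [← h]; simp [Real.zero_rpow (show p - 1 ≠ 0 by linarith)]
  · rw [← Real.rpow_add_one h.ne' (p - 2)]; ring_nf

lemma aux3 {p t : ℝ} (hp : 1 < p) (ht : 0 ≤ t) : (t ^ (p - 1)) ^ (p / (p - 1)) = t ^ p := by
  rw [← Real.rpow_mul ht]
  congr 1
  have h1 : p - 1 ≠ 0 := by linarith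
  field_simp

set_option maxHeartbeats 1000000 in
theorem stmt_18 (n : ℕ) (hn : 1 ≤ n) (p b : ℝ) (hp : 1 < p) (hb : b < 0)
    (v η : EuclideanSpace ℝ (Fin n) → ℝ)
    (hv : ContDiff ℝ (⊤ : ℕ∞) v) (hη : ContDiff ℝ (⊤ : ℕ∞) η)
    (hηc : HasCompactSupport η) (hηnn : ∀ x, 0 ≤ η x)
    (hF : ContDiff ℝ 1 (fun x => ‖gradient v x‖ ^ (p - 2) • gradient v x))
    (hbv : ∀ x ∈ tsupport η, 0 < b * v x)
    (hpde : ∀ x, b * v x * divergence (fun y => ‖gradient v y‖ ^ (p - 2) • gradient v y) x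
        + ‖gradient v x‖ ^ p = 0) :
    ∫ x, ‖gradient v x‖ ^ p * η x ^ p
      ≤ (2 * p * |b| / (1 - b)) ^ p * ∫ x, |v x| ^ p * ‖gradient η x‖ ^ p := by
  classical
  set F : EuclideanSpace ℝ (Fin n) → EuclideanSpace ℝ (Fin n) := fun x => ‖gradient v x‖ ^ (p - 2) • gradient v x with hFdef
  set G : EuclideanSpace ℝ (Fin n) → ℝ := fun x => b * v x * η x ^ p with hGdef
  have hp0 : (0:ℝ) < p := by linarith
  have hp1 : (0:ℝ) < p - 1 := by linarith
  have hb1 : (0:ℝ) < 1 - b := by linarith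
  have hvd : Differentiable ℝ v := hv.differentiable (by simp)
  have hηd : Differentiable ℝ η := hη.differentiable (by simp)
  have hFd : Differentiable ℝ F := hF.differentiable one_ne_zero
  have hFc : Continuous F := hF.continuous
  -- gradient / fderiv dictionary
  have hgrad : ∀ (f : EuclideanSpace ℝ (Fin n) → ℝ) (x w : EuclideanSpace ℝ (Fin n)), fderiv ℝ f x w = inner ℝ (gradient f x) w := by
    intro f x w
    simp [gradient, InnerProductSpace.toDual_apply_apply]
  have hgnorm : ∀ (f : EuclideanSpace ℝ (Fin n) → ℝ) (x : EuclideanSpace ℝ (Fin n)), ‖gradient f x‖ = ‖fderiv ℝ f x‖ := by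
    intro f x; simp [gradient]
  -- derivative of G
  set G' : EuclideanSpace ℝ (Fin n) → (EuclideanSpace ℝ (Fin n) →L[ℝ] ℝ) := fun x =>
    (b * η x ^ p) • fderiv ℝ v x + (b * p * v x * η x ^ (p - 1)) • fderiv ℝ η x with hG'def
  have hηp : ∀ x, HasFDerivAt (fun y => η y ^ p) ((p * η x ^ (p - 1)) • fderiv ℝ η x) x := by
    intro x
    exact (Real.hasDerivAt_rpow_const (Or.inr hp.le)).comp_hasFDerivAt x (hηd x).hasFDerivAt
  have hG'at : ∀ x, HasFDerivAt G (G' x) x := by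
    intro x
    have h1 : HasFDerivAt (fun y => (b * v y) * η y ^ p)
        ((b * v x) • ((p * η x ^ (p - 1)) • fderiv ℝ η x) + (η x ^ p) • (b • fderiv ℝ v x)) x :=
      (((hvd x).hasFDerivAt.const_mul b).mul (hηp x))
    have h2 : ((b * v x) • ((p * η x ^ (p - 1)) • fderiv ℝ η x) + (η x ^ p) • (b • fderiv ℝ v x))
        = G' x := by
      ext w
      simp [hG'def]
      ring
    rw [h2] at h1
    exact h1
  have hGd : Differentiable ℝ G := fun x => (hG'at x).differentiableAt
  have hfderivG : ∀ x, fderiv ℝ G x = G' x := fun x => (hG'at x).fderiv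
  -- vanishing outside the support of η
  have hout : ∀ x ∉ tsupport η, η x = 0 := fun x hx => image_eq_zero_of_notMem_tsupport hx
  have houtd : ∀ x ∉ tsupport η, fderiv ℝ η x = 0 := by
    intro x hx
    by_contra h
    exact hx (support_fderiv_subset ℝ h)
  have hηp0 : ∀ x ∉ tsupport η, η x ^ p = 0 := by
    intro x hx; rw [hout x hx, Real.zero_rpow hp0.ne']
  have hηp10 : ∀ x ∉ tsupport η, η x ^ (p - 1) = 0 := by
    intro x hx; rw [hout x hx, Real.zero_rpow hp1.ne']
  have hG'0 : ∀ x ∉ tsupport η, G' x = 0 := by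
    intro x hx
    rw [hG'def]
    simp only [hηp0 x hx, hηp10 x hx, mul_zero, zero_mul, zero_smul, add_zero, zero_add,
      mul_zero]
  have hG0 : ∀ x ∉ tsupport η, G x = 0 := by
    intro x hx; rw [hGdef]; simp [hηp0 x hx]
  -- integrability maker
  have mkint : ∀ (f : EuclideanSpace ℝ (Fin n) → ℝ), Continuous f →
      (∀ x ∉ tsupport η, f x = 0) → Integrable f volume := by
    intro f hf h0
    exact hf.integrable_of_hasCompactSupport (HasCompactSupport.intro hηc h0)
  -- continuity facts
  have hcv : Continuous fun x => fderiv ℝ v x := hv.continuous_fderiv (by simp)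
  have hcη : Continuous fun x => fderiv ℝ η x := hη.continuous_fderiv (by simp)
  have hcF' : Continuous fun x => fderiv ℝ F x := hF.continuous_fderiv one_ne_zero
  have hcηp : Continuous fun x => η x ^ p :=
    hη.continuous.rpow_const (fun x => Or.inr hp0.le)
  have hcηp1 : Continuous fun x => η x ^ (p - 1) :=
    hη.continuous.rpow_const (fun x => Or.inr hp1.le)
  have hcG : Continuous G := (continuous_const.mul hv.continuous).mul hcηp
  have hcG' : Continuous G' := by
    apply Continuous.add
    · exact (continuous_const.mul hcηp).smul hcv
    · exact ((continuous_const.mul hv.continuous).mul hcηp1).smul hcη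
  have hcFi : ∀ i : Fin n, Continuous fun x => F x i := by
    intro i
    exact (EuclideanSpace.proj (𝕜 := ℝ) i).continuous.comp hFc
  -- component derivatives of F
  set e : Fin n → EuclideanSpace ℝ (Fin n) := fun i => EuclideanSpace.single i (1:ℝ) with hedef
  have hFi : ∀ (i : Fin n) (x : EuclideanSpace ℝ (Fin n)),
      HasFDerivAt (fun y => F y i) ((EuclideanSpace.proj (𝕜 := ℝ) i).comp (fderiv ℝ F x)) x := by
    intro i x
    exact (EuclideanSpace.proj (𝕜 := ℝ) i).hasFDerivAt.comp x (hFd x).hasFDerivAt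
  have hfiF : ∀ (i : Fin n) x, fderiv ℝ (fun y => F y i) x
      = (EuclideanSpace.proj (𝕜 := ℝ) i).comp (fderiv ℝ F x) := fun i x => (hFi i x).fderiv
  -- integrability of the three integrand families
  have int1 : ∀ i : Fin n, Integrable (fun x => fderiv ℝ G x (e i) * F x i) volume := by
    intro i
    apply mkint
    · have : Continuous fun x => fderiv ℝ G x (e i) := by
        simp only [hfderivG]
        exact hcG'.clm_apply continuous_const
      exact this.mul (hcFi i)
    · intro x hx
      rw [hfderivG, hG'0 x hx]
      simp
  have int2 : ∀ i : Fin n, Integrable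
      (fun x => G x * fderiv ℝ (fun y => F y i) x (e i)) volume := by
    intro i
    apply mkint
    · apply hcG.mul
      have : Continuous fun x => fderiv ℝ F x (e i) := hcF'.clm_apply continuous_const
      simp only [hfiF]
      exact (EuclideanSpace.proj (𝕜 := ℝ) i).continuous.comp this
    · intro x hx
      rw [hG0 x hx, zero_mul]
  have int3 : ∀ i : Fin n, Integrable (fun x => G x * F x i) volume := by
    intro i
    apply mkint
    · exact hcG.mul (hcFi i)
    · intro x hx
      rw [hG0 x hx, zero_mul]
  have int2' : ∀ i : Fin n, Integrable
      (fun x => G x * fderiv ℝ F x (e i) i) volume := by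
    intro i
    have := int2 i
    simpa only [hfiF, ContinuousLinearMap.comp_apply, PiLp.proj_apply] using this
  have int1' : ∀ i : Fin n, Integrable (fun x => G' x (e i) * F x i) volume := by
    intro i
    have := int1 i
    simpa only [hfderivG] using this
  -- integration by parts in each coordinate direction
  have ibp : ∀ i : Fin n, ∫ x, G x * fderiv ℝ F x (e i) i = - ∫ x, G' x (e i) * F x i := by
    intro i
    have h := integral_mul_fderiv_eq_neg_fderiv_mul_of_integrable
      (μ := volume) (f := G) (g := fun y => F y i) (v := e i)
      (int1 i) (int2 i) (int3 i) (fun x _ => hGd x) (fun x _ => (hFi i x).differentiableAt)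
    simpa only [hfiF, hfderivG, ContinuousLinearMap.comp_apply, PiLp.proj_apply] using h
  -- summing over coordinates
  have hdecomp : ∀ y : EuclideanSpace ℝ (Fin n), ∑ i, y i • e i = y := by
    intro y
    ext j
    rw [show ((∑ i, y i • e i) j) = ∑ i, (y i • e i) j by rw [WithLp.ofLp_sum, Finset.sum_apply]]
    simp [hedef, EuclideanSpace.single_apply]
  have sum1 : ∫ x, G x * divergence F x = ∑ i, ∫ x, G x * fderiv ℝ F x (e i) i := by
    rw [← integral_finset_sum Finset.univ (fun i _ => int2' i)]
    congr 1
    funext x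
    rw [divergence, Finset.mul_sum]
  have sum2 : ∑ i, ∫ x, G' x (e i) * F x i = ∫ x, G' x (F x) := by
    rw [← integral_finset_sum Finset.univ (fun i _ => int1' i)]
    congr 1
    funext x
    conv_rhs => rw [← hdecomp (F x)]
    rw [map_sum]
    congr 1
    funext i
    rw [(G' x).map_smul, smul_eq_mul, mul_comm]
  have eqA : ∫ x, G x * divergence F x = - ∫ x, G' x (F x) := by
    rw [sum1, ← sum2]
    rw [← Finset.sum_neg_distrib]
    exact Finset.sum_congr rfl (fun i _ => ibp i)
  -- pointwise values
  have hFval : ∀ x, fderiv ℝ v x (F x) = ‖gradient v x‖ ^ p := by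
    intro x
    rw [hgrad, hFdef]
    simp only [real_inner_smul_right, real_inner_self_eq_norm_sq]
    exact aux1 hp (norm_nonneg _)
  have hFnorm : ∀ x, ‖F x‖ = ‖gradient v x‖ ^ (p - 1) := by
    intro x
    rw [hFdef]
    simp only [norm_smul, Real.norm_eq_abs,
      abs_of_nonneg (Real.rpow_nonneg (norm_nonneg _) _)]
    exact aux2 hp (norm_nonneg _)
  set S : EuclideanSpace ℝ (Fin n) → ℝ := fun x => ‖gradient v x‖ ^ p * η x ^ p with hSdef
  set T : EuclideanSpace ℝ (Fin n) → ℝ := fun x => |v x| ^ p * ‖gradient η x‖ ^ p with hTdef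
  set R : EuclideanSpace ℝ (Fin n) → ℝ :=
    fun x => b * p * v x * η x ^ (p - 1) * fderiv ℝ η x (F x) with hRdef
  have hG'F : ∀ x, G' x (F x) = b * S x + R x := by
    intro x
    rw [hG'def, hSdef, hRdef]
    simp only [ContinuousLinearMap.add_apply, ContinuousLinearMap.coe_smul',
      Pi.smul_apply, smul_eq_mul]
    rw [hFval]
    ring
  -- more continuity / integrability
  have hgcv : Continuous fun x => ‖gradient v x‖ := by
    have h : (fun x => ‖gradient v x‖) = fun x => ‖fderiv ℝ v x‖ := funext (hgnorm v)
    rw [h]; exact hcv.norm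
  have hgcη : Continuous fun x => ‖gradient η x‖ := by
    have h : (fun x => ‖gradient η x‖) = fun x => ‖fderiv ℝ η x‖ := funext (hgnorm η)
    rw [h]; exact hcη.norm
  have hgη0 : ∀ x ∉ tsupport η, ‖gradient η x‖ = 0 := by
    intro x hx
    rw [hgnorm, houtd x hx, norm_zero]
  have hSint : Integrable S volume := by
    apply mkint
    · exact (hgcv.rpow_const (fun x => Or.inr hp0.le)).mul hcηp
    · intro x hx; rw [hSdef]; simp [hηp0 x hx]
  have hTint : Integrable T volume := by
    apply mkint
    · exact ((hv.continuous.abs).rpow_const (fun x => Or.inr hp0.le)).mul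
        ((hgcη).rpow_const (fun x => Or.inr hp0.le))
    · intro x hx
      rw [hTdef]
      simp [hgη0 x hx, Real.zero_rpow hp0.ne']
  have hRint : Integrable R volume := by
    apply mkint
    · exact (((continuous_const.mul hv.continuous)).mul hcηp1).mul (hcη.clm_apply hFc)
    · intro x hx; rw [hRdef]; simp [hηp10 x hx]
  -- the PDE pointwise
  have eqL : ∀ x, G x * divergence F x = -(S x) := by
    intro x
    have h := hpde x
    show b * v x * η x ^ p * divergence F x = -(‖gradient v x‖ ^ p * η x ^ p)
    linear_combination η x ^ p * h
  -- main identity: (1 - b) ∫ S = ∫ R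
  have e1 : ∫ x, G x * divergence F x = - ∫ x, S x := by
    simp only [eqL]
    rw [integral_neg]
  have e2 : ∫ x, G' x (F x) = b * (∫ x, S x) + ∫ x, R x := by
    simp only [hG'F]
    rw [integral_add (hSint.const_mul b) hRint, MeasureTheory.integral_const_mul]
  have key : (1 - b) * ∫ x, S x = ∫ x, R x := by
    rw [e1, e2] at eqA
    linarith
  -- pointwise Young bound
  set t : ℝ := 2 * p * |b| / (1 - b) with htdef
  have ht : 0 ≤ t := by
    rw [htdef]
    have : 0 < |b| := abs_pos.mpr hb.ne
    positivity
  set K : ℝ := t ^ p * ((1 - b) / 2) with hKdef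
  have hbound : ∀ x, R x ≤ (1 - b) / 2 * S x + K * T x := by
    intro x
    set a : ℝ := η x ^ (p - 1) * ‖gradient v x‖ ^ (p - 1) with hadef
    set c : ℝ := |v x| * ‖gradient η x‖ with hcdef
    have ha : 0 ≤ a := mul_nonneg (Real.rpow_nonneg (hηnn x) _)
      (Real.rpow_nonneg (norm_nonneg _) _)
    have hc : 0 ≤ c := mul_nonneg (abs_nonneg _) (norm_nonneg _)
    have hy := young_aux hp ht ha hc
    have hA : a ^ (p / (p - 1)) = S x := by
      rw [hadef, Real.mul_rpow (Real.rpow_nonneg (hηnn x) _)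
        (Real.rpow_nonneg (norm_nonneg _) _), aux3 hp (hηnn x), aux3 hp (norm_nonneg _), hSdef]
      dsimp only
      ring
    have hC : c ^ p = T x := by
      rw [hcdef, Real.mul_rpow (abs_nonneg _) (norm_nonneg _), hTdef]
    have h1 : |fderiv ℝ η x (F x)| ≤ ‖gradient η x‖ * ‖gradient v x‖ ^ (p - 1) := by
      calc |fderiv ℝ η x (F x)| = ‖fderiv ℝ η x (F x)‖ := (Real.norm_eq_abs _).symm
        _ ≤ ‖fderiv ℝ η x‖ * ‖F x‖ := (fderiv ℝ η x).le_opNorm (F x)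
        _ = ‖gradient η x‖ * ‖gradient v x‖ ^ (p - 1) := by rw [← hgnorm, hFnorm]
    have hR1 : R x ≤ p * |b| * (a * c) := by
      calc R x ≤ |R x| := le_abs_self _
        _ = (p * |b| * (η x ^ (p - 1)) * |v x|) * |fderiv ℝ η x (F x)| := by
            rw [hRdef]
            dsimp only
            rw [abs_mul]
            congr 1
            rw [abs_mul, abs_mul, abs_mul, abs_of_pos hp0,
              abs_of_nonneg (Real.rpow_nonneg (hηnn x) _)]
            ring
        _ ≤ (p * |b| * (η x ^ (p - 1)) * |v x|) * (‖gradient η x‖ * ‖gradient v x‖ ^ (p - 1)) := by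
            apply mul_le_mul_of_nonneg_left h1
            have : 0 ≤ η x ^ (p - 1) := Real.rpow_nonneg (hηnn x) _
            positivity
        _ = p * |b| * (a * c) := by rw [hadef, hcdef]; ring
    have hpb : p * |b| = (1 - b) / 2 * t := by
      rw [htdef]
      field_simp
    calc R x ≤ p * |b| * (a * c) := hR1
      _ = (1 - b) / 2 * (t * (a * c)) := by rw [hpb]; ring
      _ ≤ (1 - b) / 2 * (a ^ (p / (p - 1)) + t ^ p * c ^ p) := by
          apply mul_le_mul_of_nonneg_left hy
          positivity
      _ = (1 - b) / 2 * S x + K * T x := by rw [hA, hC, hKdef]; ring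
  -- integrate the bound and conclude
  have hmono : ∫ x, R x ≤ ∫ x, ((1 - b) / 2 * S x + K * T x) :=
    integral_mono hRint ((hSint.const_mul ((1 - b) / 2)).add (hTint.const_mul K)) hbound
  rw [integral_add (hSint.const_mul _) (hTint.const_mul _), MeasureTheory.integral_const_mul,
    MeasureTheory.integral_const_mul] at hmono
  have h2 : (1 - b) / 2 * ∫ x, S x ≤ K * ∫ x, T x := by linarith
  rw [hKdef] at h2
  show ∫ x, S x ≤ t ^ p * ∫ x, T x
  nlinarith [h2, hb1]
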